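/- Under the hypotheses of the local theorem, if σ is a k'-automorphism of k'(α_1, …, α_m) with σ(α_i) = α_{π(i)} for a permutation π of {1, …, m}, then σ applied coefficientwise to λ_i(X) yields λ_{π(i)}(X). -/

import Mathlib

/-!
Let `E` be the shift operator on sequences `ℕ → K`. Since `(E - α)(αⁿ f n) = α · αⁿ (Δf) n`, the
sequence `n ↦ p(n) αⁿ` is killed by `(E - α) ^ (deg p + 1)`, i.e. it lies in the generalized
`α`-eigenspace of `E`. Generalized eigenspaces for distinct eigenvalues are independent, so in
characteristic zero a sequence has at most one representation `∑ λᵢ(n) αᵢⁿ` with distinct nonzero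
`αᵢ`, even if only for `n ≥ n₀`. Applying `σ` to the `k'`-rational values `Sₙ` yields the second
representation `∑ σ(λᵢ)(n) α_{π i}ⁿ`, whence `σ(λᵢ) = λ_{π i}`.
-/

open Polynomial Module.End Finset fwdDiff

section ShiftOperator

variable (R : Type*) [CommRing R]

def seqShift : Module.End R (ℕ → R) := LinearMap.funLeft R R (· + 1)

variable {R}

theorem fwdDiff_iter_comp_natCast {G : Type*} [AddCommGroup G] (f : R → G) (k : ℕ) :
    (Δ_[1])^[k] (f ∘ Nat.cast) = ((Δ_[1])^[k] f) ∘ Nat.cast := by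
  induction k with
  | zero => rfl
  | succ k ih =>
    rw [Function.iterate_succ_apply', Function.iterate_succ_apply', ih]
    ext n
    simp [fwdDiff]

theorem seqShift_sub_smul_pow_geom_mul (a : R) (k : ℕ) (f : ℕ → R) :
    ((seqShift R - a • 1) ^ k) (fun n ↦ a ^ n * f n) =
      a ^ k • fun n ↦ a ^ n * ((Δ_[1])^[k] f) n := by
  induction k generalizing f with
  | zero => simp
  | succ k ih =>
    have hstep : (seqShift R - a • 1) (fun n ↦ a ^ n * f n) = a • fun n ↦ a ^ n * Δ_[1] f n := by
      ext n
      simp only [seqShift, LinearMap.sub_apply, LinearMap.smul_apply, Module.End.one_apply,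
        Pi.sub_apply, LinearMap.funLeft_apply, pow_succ, Pi.smul_apply, smul_eq_mul, fwdDiff]
      ring
    rw [pow_succ, Module.End.mul_apply, hstep, map_smul, ih, smul_smul, pow_succ',
      Function.iterate_succ_apply]

theorem geom_mul_eval_mem_maxGenEigenspace (a : R) (p : R[X]) :
    (fun n : ℕ ↦ a ^ n * p.eval (n : R)) ∈ (seqShift R).maxGenEigenspace a := by
  rw [mem_maxGenEigenspace]
  refine ⟨p.natDegree + 1, ?_⟩
  have := seqShift_sub_smul_pow_geom_mul a (p.natDegree + 1) (p.eval ∘ Nat.cast)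
  simp only [Function.comp_apply] at this
  rw [this, fwdDiff_iter_comp_natCast, p.fwdDiff_iter_degree_add_one_eq_zero]
  ext n
  simp

end ShiftOperator

theorem Polynomial.eq_zero_of_eval_natCast_eq_zero_of_le {R : Type*} [CommRing R] [IsDomain R]
    [CharZero R] (p : R[X]) (n₀ : ℕ) (h : ∀ n, n₀ ≤ n → p.eval (n : R) = 0) : p = 0 :=
  p.eq_zero_of_infinite_isRoot <| ((Set.Ici_infinite n₀).image Nat.cast_injective.injOn).mono <| by
    rintro _ ⟨n, hn, rfl⟩
    exact h n hn

section Uniqueness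

variable {K ι : Type*} [Field K] [CharZero K] [Fintype ι] {a : ι → K}

theorem Polynomial.eq_zero_of_sum_eval_mul_pow_eq_zero (ha0 : ∀ i, a i ≠ 0)
    (ha : Function.Injective a) (p : ι → K[X]) (n₀ : ℕ)
    (h : ∀ n, n₀ ≤ n → ∑ i, (p i).eval (n : K) * a i ^ n = 0) (i : ι) : p i = 0 := by
  -- the shift by `n₀` turns an eventual identity into an identity of sequences
  set q : ι → K[X] := fun i ↦ C (a i ^ n₀) * (p i).comp (X + C (n₀ : K))
  have hq : ∀ i (n : ℕ), a i ^ n * (q i).eval (n : K) =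
      (p i).eval (↑(n + n₀) : K) * a i ^ (n + n₀) := by
    intro i n
    simp only [q, eval_mul, eval_C, eval_comp, eval_add, eval_X, Nat.cast_add]
    ring
  have hindep := ((seqShift K).independent_genEigenspace ⊤).comp ha
  rw [iSupIndep_iff_finsetSum_eq_zero_imp_eq_zero] at hindep
  have hzero := hindep univ (fun i n ↦ a i ^ n * (q i).eval (n : K))
    (fun i _ ↦ geom_mul_eval_mem_maxGenEigenspace (a i) (q i))
    (by ext n; simpa [Finset.sum_apply, hq] using h (n + n₀) (by omega)) i (mem_univ i)
  refine (p i).eq_zero_of_eval_natCast_eq_zero_of_le n₀ fun n hn ↦ ?_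
  obtain ⟨k, rfl⟩ := Nat.exists_eq_add_of_le' hn
  simpa only [hq, Pi.zero_apply, mul_eq_zero, pow_eq_zero_iff', ha0, false_and, or_false] using
    congrFun hzero k

theorem Polynomial.eq_of_sum_eval_mul_pow_eq (ha0 : ∀ i, a i ≠ 0) (ha : Function.Injective a)
    (p q : ι → K[X]) (n₀ : ℕ)
    (h : ∀ n, n₀ ≤ n → ∑ i, (p i).eval (n : K) * a i ^ n = ∑ i, (q i).eval (n : K) * a i ^ n) :
    p = q := by
  funext i
  refine sub_eq_zero.mp (eq_zero_of_sum_eval_mul_pow_eq_zero ha0 ha (p - q) n₀ (fun n hn ↦ ?_) i)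
  simp [sub_mul, sum_sub_distrib, h n hn]

end Uniqueness

theorem AlgEquiv.map_eq_of_sum_eval_mul_pow_mem_range {k L ι : Type*} [CommRing k] [Field L]
    [CharZero L] [Algebra k L] [Fintype ι] (σ : L ≃ₐ[k] L) (π : Equiv.Perm ι) {a : ι → L}
    (ha0 : ∀ i, a i ≠ 0) (ha : Function.Injective a) (hσ : ∀ i, σ (a i) = a (π i))
    (p : ι → L[X]) (n₀ : ℕ)
    (h : ∀ n, n₀ ≤ n → ∑ i, (p i).eval (n : L) * a i ^ n ∈ Set.range (algebraMap k L))
    (i : ι) : (p i).map (σ : L →+* L) = p (π i) := by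
  suffices hperm : (fun i ↦ (p (π.symm i)).map (σ : L →+* L)) = p by
    simpa using congrFun hperm (π i)
  refine eq_of_sum_eval_mul_pow_eq ha0 ha _ _ n₀ fun n hn ↦ ?_
  obtain ⟨s, hs⟩ := h n hn
  calc ∑ i, ((p (π.symm i)).map (σ : L →+* L)).eval (n : L) * a i ^ n
      = ∑ i, ((p i).map (σ : L →+* L)).eval (n : L) * a (π i) ^ n :=
        (Equiv.sum_comp π _).symm.trans (by simp)
    _ = σ (∑ i, (p i).eval (n : L) * a i ^ n) := by simp [hσ]
    _ = ∑ i, (p i).eval (n : L) * a i ^ n := by rw [← hs, AlgEquiv.commutes]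

theorem automorphism_permutes_lambdas
    (k' : Type*) [Field k'] (K : Type*) [Field K] [Algebra k' K] [CharZero K]
    (m : ℕ) (α : Fin m → K) (hα0 : ∀ i, α i ≠ 0) (hαinj : Function.Injective α)
    (lam : Fin m → Polynomial K)
    (n₀ : ℕ)
    (hS : ∀ n : ℕ, n₀ ≤ n →
      ∃ s : k', algebraMap k' K s = ∑ i, (lam i).eval (n : K) * α i ^ n)
    (hmem : ∀ i j, (lam i).coeff j ∈
      (IntermediateField.adjoin k' (Set.range α) : IntermediateField k' K))
    (σ : (IntermediateField.adjoin k' (Set.range α) : IntermediateField k' K) ≃ₐ[k']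
         (IntermediateField.adjoin k' (Set.range α) : IntermediateField k' K))
    (π : Equiv.Perm (Fin m))
    (hσ : ∀ i, σ ⟨α i, IntermediateField.subset_adjoin k' (Set.range α) ⟨i, rfl⟩⟩ =
      ⟨α (π i), IntermediateField.subset_adjoin k' (Set.range α) ⟨π i, rfl⟩⟩) :
    ∀ i j, (σ ⟨(lam i).coeff j, hmem i j⟩ : K) = (lam (π i)).coeff j := by
  let a : Fin m → IntermediateField.adjoin k' (Set.range α) := fun i ↦
    ⟨α i, IntermediateField.subset_adjoin k' (Set.range α) ⟨i, rfl⟩⟩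
  choose Λ hΛ using fun i ↦ (mem_lifts (lam i)).mp <|
    (lifts_iff_coeff_lifts (f := algebraMap (IntermediateField.adjoin k' (Set.range α)) K)
      _).mpr fun j ↦ ⟨⟨_, hmem i j⟩, rfl⟩
  have hΛcoeff : ∀ i j, (Λ i).coeff j = ⟨(lam i).coeff j, hmem i j⟩ := fun i j ↦
    Subtype.ext ((coeff_map _ _).symm.trans (congrArg (coeff · j) (hΛ i)))
  have hrat : ∀ n, n₀ ≤ n → ∑ i, (Λ i).eval (n : IntermediateField.adjoin k' (Set.range α)) *
      a i ^ n ∈ Set.range (algebraMap k' (IntermediateField.adjoin k' (Set.range α))) := by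
    intro n hn
    obtain ⟨s, hs⟩ := hS n hn
    refine ⟨s, (algebraMap (IntermediateField.adjoin k' (Set.range α)) K).injective ?_⟩
    rw [IntermediateField.algebraMap_apply, IntermediateField.coe_algebraMap_apply, hs, map_sum]
    simp only [map_mul, map_pow, ← eval_natCast_map, hΛ]
    rfl
  have hconj := σ.map_eq_of_sum_eval_mul_pow_mem_range π (fun i h ↦ hα0 i (congrArg Subtype.val h))
    (fun _ _ h ↦ hαinj (congrArg Subtype.val h)) hσ Λ n₀ hrat
  intro i j
  rw [← hΛcoeff, ← hΛ, coeff_map, ← hconj i, coeff_map]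
  rfl
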